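/- (Lemma 4.1) Let M be a partial matrix over a field F and v a partial column on the same rows. If for every completion M̄ of M there exists a completion v̄ of v lying in the column space of M̄, then mr([v | M]) = mr(M). -/

import Mathlib

/-- `N` is a completion of the partial matrix `(M, Ω)`: it agrees with `M`
on all known positions `Ω`. -/
def IsCompletion {F m n : Type*} [Field F] (M : Matrix m n F) (Ω : Set (m × n))
    (N : Matrix m n F) : Prop :=
  ∀ p ∈ Ω, N p.1 p.2 = M p.1 p.2

/-- The minimum rank of the partial matrix `(M, Ω)`: the minimum of the ranks of
its completions. -/
noncomputable def mr {F m n : Type*} [Field F] [Fintype m] [Fintype n]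
    (M : Matrix m n F) (Ω : Set (m × n)) : ℕ :=
  sInf {r | ∃ N : Matrix m n F, IsCompletion M Ω N ∧ N.rank = r}

/-- The partial matrix `[u | A]`: the partial column `u` (with known row set `Ωu`)
adjoined as an extra (first) column to `A`. -/
def augMat {F m n : Type*} [Field F] (u : m → F) (A : Matrix m n F) :
    Matrix m (Unit ⊕ n) F :=
  Matrix.of fun i => Sum.elim (fun _ => u i) (A i)

/-- Known positions of the partial matrix `[u | A]`, inherited from `Ωu` and `ΩA`. -/
def augSet {m n : Type*} (Ωu : Set m) (ΩA : Set (m × n)) : Set (m × (Unit ⊕ n)) :=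
  {p | Sum.elim (fun _ => p.1 ∈ Ωu) (fun j => (p.1, j) ∈ ΩA) p.2}

/-- `zero (u, A) = 1`, as a proposition: every completion of `[u | A]` attaining the
minimum rank has zero `u`-column. -/
def zeroProp {F m n : Type*} [Field F] [Fintype m] [Fintype n]
    (u : m → F) (Ωu : Set m) (A : Matrix m n F) (ΩA : Set (m × n)) : Prop :=
  ∀ N : Matrix m (Unit ⊕ n) F, IsCompletion (augMat u A) (augSet Ωu ΩA) N →
    N.rank = mr (augMat u A) (augSet Ωu ΩA) → ∀ i, N i (Sum.inl ()) = 0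

open Matrix

section

variable {F m n : Type*} [Field F]

theorem isCompletion_augMat {v w : m → F} {Ωv : Set m} {M N : Matrix m n F} {ΩM : Set (m × n)}
    (hw : ∀ i ∈ Ωv, w i = v i) (hN : IsCompletion M ΩM N) :
    IsCompletion (augMat v M) (augSet Ωv ΩM) (augMat w N) := by
  rintro ⟨i, _ | j⟩ hp
  · exact hw i hp
  · exact hN (i, j) hp

theorem IsCompletion.submatrix_inr {v : m → F} {Ωv : Set m} {M : Matrix m n F}
    {ΩM : Set (m × n)} {N : Matrix m (Unit ⊕ n) F}
    (hN : IsCompletion (augMat v M) (augSet Ωv ΩM) N) :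
    IsCompletion M ΩM (N.submatrix id Sum.inr) :=
  fun p hp => hN (p.1, Sum.inr p.2) hp

theorem range_col_augMat (w : m → F) (N : Matrix m n F) :
    Set.range (augMat w N).col = insert w (Set.range N.col) := by
  have hcol : (augMat w N).col = Sum.elim (fun _ => w) N.col := by
    funext k
    cases k <;> rfl
  rw [hcol, Set.Sum.elim_range, Set.range_const, Set.singleton_union]

theorem rank_augMat_of_mem_span [Fintype n] {w : m → F} {N : Matrix m n F}
    (hw : w ∈ Submodule.span F (Set.range N.col)) : (augMat w N).rank = N.rank := by
  rw [rank_eq_finrank_span_cols, rank_eq_finrank_span_cols, range_col_augMat,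
    Submodule.span_insert_eq_span hw]

variable [Fintype m] [Fintype n]

theorem mr_le_rank {M N : Matrix m n F} {Ω : Set (m × n)} (hN : IsCompletion M Ω N) :
    mr M Ω ≤ N.rank :=
  Nat.sInf_le ⟨N, hN, rfl⟩

theorem exists_isCompletion_rank_eq_mr (M : Matrix m n F) (Ω : Set (m × n)) :
    ∃ N, IsCompletion M Ω N ∧ N.rank = mr M Ω :=
  Nat.sInf_mem (s := {r | ∃ N, IsCompletion M Ω N ∧ N.rank = r})
    ⟨M.rank, M, fun _ _ => rfl, rfl⟩

theorem mr_le_mr_augMat (M : Matrix m n F) (ΩM : Set (m × n)) (v : m → F) (Ωv : Set m) :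
    mr M ΩM ≤ mr (augMat v M) (augSet Ωv ΩM) := by
  obtain ⟨N, hN, hNrank⟩ := exists_isCompletion_rank_eq_mr (augMat v M) (augSet Ωv ΩM)
  calc mr M ΩM ≤ (N.submatrix id Sum.inr).rank := mr_le_rank hN.submatrix_inr
    _ ≤ N.rank := rank_submatrix_le N id Sum.inr
    _ = _ := hNrank

end

/-- Lemma 4.1: if for every completion `N` of the partial matrix `M` there is a
completion of the partial column `v` lying in the column space of `N`, then
`mr [v | M] = mr M`. -/
theorem mr_aug_eq_of_col_space {F m n : Type*} [Field F] [Fintype m] [Fintype n]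
    (M : Matrix m n F) (ΩM : Set (m × n)) (v : m → F) (Ωv : Set m)
    (h : ∀ N : Matrix m n F, IsCompletion M ΩM N →
      ∃ w : m → F, (∀ i ∈ Ωv, w i = v i) ∧
        w ∈ Submodule.span F (Set.range fun j : n => fun i : m => N i j)) :
    mr (augMat v M) (augSet Ωv ΩM) = mr M ΩM := by
  refine le_antisymm ?_ (mr_le_mr_augMat M ΩM v Ωv)
  obtain ⟨N, hN, hNrank⟩ := exists_isCompletion_rank_eq_mr M ΩM
  obtain ⟨w, hwv, hw⟩ := h N hN
  calc mr (augMat v M) (augSet Ωv ΩM) ≤ (augMat w N).rank :=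
        mr_le_rank (isCompletion_augMat hwv hN)
    _ = N.rank := rank_augMat_of_mem_span hw
    _ = mr M ΩM := hNrank
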